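/- Let X_{ij}, 1 ≤ i,j ≤ n, be i.i.d. standard normal, and define the greedy permutation π* by π*(1) = argmax_j X_{1j} and π*(i) = argmax_{j ∉ π*({1,...,i-1})} X_{ij}. Then the random variables X_{1,π*(1)}, ..., X_{n,π*(n)} are independent, and X_{i,π*(i)} is distributed as the maximum of n−i+1 i.i.d. standard normal random variables. -/

import Mathlib

/-!
Fix `m` and condition on the columns `π*(0), …, π*(m-1)` chosen before row `m`. Outside the
null event of a tie inside some row, `π*` agrees with a permutation `σ` below `m` exactly when `σ`
is greedy in the rows `0, …, m-1`, an event of the σ-algebra of those rows; and on this event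
`X_{i,π*(i)} ≤ t` for `i ≤ m` means that all entries of row `i` in the `n - i` columns left free by
`σ` are `≤ t`. Since row `m` is independent of the earlier rows, conditionally on the prefix and on
any event about the earlier selected entries, `X_{m,π*(m)} ≤ t` has probability `F(t)^(n-m)`.
Induction on the largest index gives `P(⋂_{i ∈ s} {X_{i,π*(i)} ≤ t_i}) = ∏_{i ∈ s} F(t_i)^(n-i)`
for any atomless common law with distribution function `F`, which is the law and, half-lines being
a π-system generating the Borel sets, the independence.
-/

open MeasureTheory ProbabilityTheory Real

noncomputable def stdNormalCDF (r : ℝ) : ℝ := ((gaussianReal 0 1) (Set.Iic r)).toReal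

open Set

namespace MeasureTheory

variable {Ω : Type*} [MeasurableSpace Ω] {μ : Measure Ω}

theorem measure_eq_mul_of_forall_preimage_singleton {β : Type*} [Fintype β] {f : Ω → β}
    (hf : ∀ b, MeasurableSet (f ⁻¹' {b})) {A B : Set Ω} {c : ENNReal}
    (h : ∀ b, μ (f ⁻¹' {b} ∩ A) = c * μ (f ⁻¹' {b} ∩ B)) : μ A = c * μ B := by
  have hsum : ∀ C, ∑ b, μ (f ⁻¹' {b} ∩ C) = μ C := fun C => by
    simp_rw [← Measure.restrict_apply (hf _)]
    rw [sum_measure_preimage_singleton _ fun b _ => hf b, Finset.coe_univ, Set.preimage_univ,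
      Measure.restrict_apply_univ]
  rw [← hsum A, ← hsum B, Finset.mul_sum]
  exact Finset.sum_congr rfl fun b _ => h b

end MeasureTheory

namespace ProbabilityTheory

section

variable {Ω : Type*} [MeasurableSpace Ω] {μ : Measure Ω}

theorem IndepFun.measure_eq_eq_zero [IsFiniteMeasure μ] {ν : Measure ℝ} [NullSingletonClass ν]
    {Y Z : Ω → ℝ} (hYZ : IndepFun Y Z μ) (hY : Measurable Y) (hZ : Measurable Z)
    (hlaw : μ.map Y = ν) : μ {ω | Y ω = Z ω} = 0 := by
  have hdiag : MeasurableSet {p : ℝ × ℝ | p.1 = p.2} :=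
    measurableSet_eq_fun measurable_fst measurable_snd
  have hmap := (indepFun_iff_map_prod_eq_prod_map_map hY.aemeasurable hZ.aemeasurable).1 hYZ
  subst hlaw
  change μ ((fun ω => (Y ω, Z ω)) ⁻¹' {p | p.1 = p.2}) = 0
  rw [← Measure.map_apply (hY.prodMk hZ) hdiag, hmap, Measure.prod_apply_symm hdiag]
  simp

theorem iIndepFun.measure_iInter_le_eq_pow {ι : Type*} {Y : ι → Ω → ℝ} (h : iIndepFun Y μ)
    (hY : ∀ i, Measurable (Y i)) {ν : Measure ℝ} (hlaw : ∀ i, μ.map (Y i) = ν)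
    (S : Finset ι) (t : ℝ) :
    μ (⋂ i ∈ S, Y i ⁻¹' Iic t) = ν (Iic t) ^ S.card := by
  rw [h.measure_inter_preimage_eq_mul S fun _ _ => measurableSet_Iic, Finset.prod_congr rfl
    fun i _ => by rw [← Measure.map_apply (hY i) measurableSet_Iic, hlaw], Finset.prod_const]

theorem iIndepFun_of_measure_iInter_Iic {ι : Type*} {Y : ι → Ω → ℝ} (hY : ∀ i, Measurable (Y i))
    (h : ∀ (s : Finset ι) (t : ι → ℝ),
      μ (⋂ i ∈ s, Y i ⁻¹' Iic (t i)) = ∏ i ∈ s, μ (Y i ⁻¹' Iic (t i))) :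
    iIndepFun Y μ := by
  rw [iIndepFun_iff_iIndep]
  refine iIndepSets.iIndep (fun i => (hY i).comap_le) (fun i => (Y i ⁻¹' ·) '' range Iic)
    (fun i => isPiSystem_Iic.comap (Y i)) (fun i => ?_) ?_
  · rw [← MeasurableSpace.comap_generateFrom, ← borel_eq_generateFrom_Iic,
      ← BorelSpace.measurable_eq]
  · rw [iIndepSets_iff]
    intro s E hE
    have hE' : ∀ i ∈ s, ∃ a : ℝ, Y i ⁻¹' Iic a = E i := fun i hi => by
      obtain ⟨_, ⟨a, rfl⟩, hEa⟩ := hE i hi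
      exact ⟨a, hEa⟩
    choose! a ha using hE'
    calc μ (⋂ i ∈ s, E i) = μ (⋂ i ∈ s, Y i ⁻¹' Iic (a i)) := by
          rw [iInter₂_congr fun i hi => ha i hi]
      _ = ∏ i ∈ s, μ (E i) := by
          rw [h s a]
          exact Finset.prod_congr rfl fun i hi => by rw [ha i hi]

end

section

variable {Ω ι κ : Type*} {X : ι → κ → Ω → ℝ}

abbrev rowsMeasurableSpace (X : ι → κ → Ω → ℝ) (S : Set ι) : MeasurableSpace Ω :=
  ⨆ p ∈ Prod.fst ⁻¹' S, MeasurableSpace.comap (X p.1 p.2) inferInstance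

theorem measurable_rowsMeasurableSpace {S : Set ι} {i : ι} (hi : i ∈ S) (j : κ) :
    Measurable[rowsMeasurableSpace X S] (X i j) :=
  measurable_iff_comap_le.2 <|
    le_iSup₂ (f := fun (p : ι × κ) _ => MeasurableSpace.comap (X p.1 p.2) inferInstance) (i, j) hi

theorem iIndepFun.indep_rowsMeasurableSpace [MeasurableSpace Ω] {μ : Measure Ω}
    (hindep : iIndepFun (fun p : ι × κ => X p.1 p.2) μ)
    (hX : ∀ i j, Measurable (X i j)) {S T : Set ι} (hST : Disjoint S T) :
    Indep (rowsMeasurableSpace X S) (rowsMeasurableSpace X T) μ :=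
  indep_iSup_of_disjoint (m := fun p : ι × κ => MeasurableSpace.comap (X p.1 p.2) inferInstance)
    (fun p => (hX p.1 p.2).comap_le) hindep (hST.preimage Prod.fst)

end

end ProbabilityTheory

namespace Greedy

section

variable {n : ℕ}

def availableCols (σ : Equiv.Perm (Fin n)) (i : Fin n) : Finset (Fin n) :=
  {j | ∀ k < i, σ k ≠ j}

@[simp]
theorem mem_availableCols {σ : Equiv.Perm (Fin n)} {i j : Fin n} :
    j ∈ availableCols σ i ↔ ∀ k < i, σ k ≠ j := by
  simp [availableCols]

theorem apply_mem_availableCols (σ : Equiv.Perm (Fin n)) (i : Fin n) :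
    σ i ∈ availableCols σ i :=
  mem_availableCols.2 fun _ hk h => hk.ne (σ.injective h)

theorem availableCols_congr {σ τ : Equiv.Perm (Fin n)} {i : Fin n} (h : EqOn σ τ (Iio i)) :
    availableCols σ i = availableCols τ i := by
  ext j
  simp only [mem_availableCols]
  exact forall₂_congr fun k hk => by rw [h hk]

theorem card_availableCols (σ : Equiv.Perm (Fin n)) (i : Fin n) :
    (availableCols σ i).card = n - i := by
  have : availableCols σ i = ((Finset.Iio i).map σ.toEmbedding)ᶜ := by
    ext j
    simp only [mem_availableCols, Finset.mem_compl, Finset.mem_map, Finset.mem_Iio,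
      Equiv.coe_toEmbedding, not_exists, not_and]
  rw [this, Finset.card_compl, Finset.card_map, Fin.card_Iio, Fintype.card_fin]

def IsGreedyAt (x : Fin n → Fin n → ℝ) (σ : Equiv.Perm (Fin n)) (i : Fin n) : Prop :=
  ∀ j ∈ availableCols σ i, x i j ≤ x i (σ i)

variable {x : Fin n → Fin n → ℝ} {σ τ : Equiv.Perm (Fin n)}

theorem IsGreedyAt.apply_le_iff {i : Fin n} (h : IsGreedyAt x σ i) (t : ℝ) :
    x i (σ i) ≤ t ↔ ∀ j ∈ availableCols σ i, x i j ≤ t :=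
  ⟨fun ht j hj => (h j hj).trans ht, fun ht => ht _ (apply_mem_availableCols σ i)⟩

theorem isGreedyAt_congr {i : Fin n} (h : EqOn σ τ (Iic i)) :
    IsGreedyAt x σ i ↔ IsGreedyAt x τ i := by
  rw [IsGreedyAt, IsGreedyAt, availableCols_congr (h.mono Iio_subset_Iic_self),
    h (mem_Iic.2 le_rfl)]

theorem eqOn_of_isGreedyAt (hx : ∀ i, Function.Injective (x i)) {m : Fin n}
    (hσ : ∀ k < m, IsGreedyAt x σ k) (hτ : ∀ k < m, IsGreedyAt x τ k) : EqOn σ τ (Iio m) := by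
  intro k hk
  induction k using WellFoundedLT.induction with
  | ind k ih =>
    have hfirstCols : EqOn σ τ (Iio k) := fun l hl => ih l hl (mem_Iio.2 (hl.trans (mem_Iio.1 hk)))
    rw [mem_Iio] at hk
    refine hx k (le_antisymm ?_ ?_)
    · exact hτ k hk (σ k) (availableCols_congr hfirstCols ▸ apply_mem_availableCols σ k)
    · exact hσ k hk (τ k) (availableCols_congr hfirstCols ▸ apply_mem_availableCols τ k)

end

variable {Ω : Type*} {n : ℕ} {X : Fin n → Fin n → Ω → ℝ} {πstar : Ω → Equiv.Perm (Fin n)}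

def rowMaxLE (X : Fin n → Fin n → Ω → ℝ) (σ : Equiv.Perm (Fin n)) (i : Fin n) (t : ℝ) : Set Ω :=
  {ω | ∀ j ∈ availableCols σ i, X i j ω ≤ t}

def greedyPrefixSet (X : Fin n → Fin n → Ω → ℝ) (σ : Equiv.Perm (Fin n)) (m : Fin n) : Set Ω :=
  {ω | ∀ k < m, IsGreedyAt (X · · ω) σ k}

def selectedEntry (X : Fin n → Fin n → Ω → ℝ) (πstar : Ω → Equiv.Perm (Fin n)) (i : Fin n) :
    Ω → ℝ :=
  fun ω => X i (πstar ω i) ω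

theorem measurableSet_rowMaxLE {S : Set (Fin n)} {i : Fin n} (hi : i ∈ S)
    (σ : Equiv.Perm (Fin n)) (t : ℝ) :
    MeasurableSet[rowsMeasurableSpace X S] (rowMaxLE X σ i t) := by
  simp only [rowMaxLE, ofPred_forall]
  exact .iInter fun j => .iInter fun _ =>
    measurableSet_le (measurable_rowsMeasurableSpace hi j) measurable_const

theorem measurableSet_greedyPrefixSet (σ : Equiv.Perm (Fin n)) (m : Fin n) :
    MeasurableSet[rowsMeasurableSpace X (Iio m)] (greedyPrefixSet X σ m) := by
  simp only [greedyPrefixSet, IsGreedyAt, ofPred_forall]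
  exact .iInter fun k => .iInter fun hk => .iInter fun j => .iInter fun _ =>
    measurableSet_le (measurable_rowsMeasurableSpace (mem_Iio.2 hk) j)
      (measurable_rowsMeasurableSpace (mem_Iio.2 hk) _)

theorem selectedEntry_le_iff (hgreedy : ∀ ω i, IsGreedyAt (X · · ω) (πstar ω) i) {ω : Ω}
    {σ : Equiv.Perm (Fin n)} {i : Fin n} (h : EqOn (πstar ω) σ (Iio i)) (t : ℝ) :
    selectedEntry X πstar i ω ≤ t ↔ ω ∈ rowMaxLE X σ i t := by
  rw [selectedEntry, (hgreedy ω i).apply_le_iff, availableCols_congr h]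
  rfl

theorem eqOn_iff_mem_greedyPrefixSet (hgreedy : ∀ ω i, IsGreedyAt (X · · ω) (πstar ω) i)
    {ω : Ω} (hω : ∀ i, Function.Injective (X i · ω)) (σ : Equiv.Perm (Fin n)) (m : Fin n) :
    EqOn (πstar ω) σ (Iio m) ↔ ω ∈ greedyPrefixSet X σ m :=
  ⟨fun h k hk => (isGreedyAt_congr fun _ hl => h (mem_Iio.2 (lt_of_le_of_lt hl hk))).1
      (hgreedy ω k),
    fun h => eqOn_of_isGreedyAt hω (fun k _ => hgreedy ω k) h⟩

variable [MeasurableSpace Ω] {μ : Measure Ω}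

theorem measurable_selectedEntry (hX : ∀ i j, Measurable (X i j))
    (hπ : ∀ i, Measurable fun ω => πstar ω i) (i : Fin n) :
    Measurable (selectedEntry X πstar i) :=
  (measurable_from_prod_countable_left (f := fun p : Ω × Fin n => X i p.2 p.1) fun j => hX i j).comp
    (measurable_id.prodMk (hπ i))

theorem measure_rowMaxLE (hX : ∀ i j, Measurable (X i j)) {ν : Measure ℝ}
    (hlaw : ∀ i j, μ.map (X i j) = ν) (hindep : iIndepFun (fun p : Fin n × Fin n => X p.1 p.2) μ)
    (σ : Equiv.Perm (Fin n)) (i : Fin n) (t : ℝ) :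
    μ (rowMaxLE X σ i t) = ν (Iic t) ^ (n - i) := by
  have hrow : iIndepFun (fun j => X i j) μ :=
    iIndepFun.precomp (f := fun p : Fin n × Fin n => X p.1 p.2) (Prod.mk_right_injective i) hindep
  rw [← card_availableCols σ i, ← hrow.measure_iInter_le_eq_pow (hX i) (hlaw i)]
  congr 1
  ext ω
  simp [rowMaxLE]

theorem ae_injective_rows [IsFiniteMeasure μ] (hX : ∀ i j, Measurable (X i j)) {ν : Measure ℝ}
    [NullSingletonClass ν] (hlaw : ∀ i j, μ.map (X i j) = ν)
    (hindep : iIndepFun (fun p : Fin n × Fin n => X p.1 p.2) μ) :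
    ∀ᵐ ω ∂μ, ∀ i, Function.Injective (X i · ω) := by
  simp only [Function.Injective, ae_all_iff]
  intro i j j'
  by_cases hjj' : j = j'
  · exact .of_forall fun _ _ => hjj'
  have hne : (i, j) ≠ (i, j') := by simpa using hjj'
  have hind : IndepFun (X i j) (X i j') μ := hindep.indepFun hne
  exact measure_mono_null (fun ω hω => (Classical.not_imp.1 hω).1)
    (hind.measure_eq_eq_zero (hX i j) (hX i j') (hlaw i j))

theorem measure_eqOn_inter_selectedEntry_le [IsFiniteMeasure μ] (hX : ∀ i j, Measurable (X i j))
    {ν : Measure ℝ} [NullSingletonClass ν] (hlaw : ∀ i j, μ.map (X i j) = ν)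
    (hindep : iIndepFun (fun p : Fin n × Fin n => X p.1 p.2) μ)
    (hgreedy : ∀ ω i, IsGreedyAt (X · · ω) (πstar ω) i) (σ : Equiv.Perm (Fin n)) {m : Fin n}
    {s : Finset (Fin n)} (hs : ∀ i ∈ s, i < m) (t : Fin n → ℝ) :
    μ ({ω | EqOn (πstar ω) σ (Iio m)} ∩ (selectedEntry X πstar m ⁻¹' Iic (t m) ∩
        ⋂ i ∈ s, selectedEntry X πstar i ⁻¹' Iic (t i))) =
      ν (Iic (t m)) ^ (n - m) *
        μ ({ω | EqOn (πstar ω) σ (Iio m)} ∩ ⋂ i ∈ s, selectedEntry X πstar i ⁻¹' Iic (t i)) := by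
  set F := {ω | EqOn (πstar ω) σ (Iio m)}
  set G := greedyPrefixSet X σ m
  set R := rowMaxLE X σ m (t m)
  set D := ⋂ i ∈ s, rowMaxLE X σ i (t i)
  have hFG : ∀ W, μ (F ∩ W) = μ (G ∩ W) := fun W => by
    refine measure_congr (Filter.EventuallyEq.inter ?_ .rfl)
    filter_upwards [ae_injective_rows hX hlaw hindep] with ω hω
    exact propext (eqOn_iff_mem_greedyPrefixSet hgreedy hω σ m)
  have hsel : ∀ ω ∈ F, ∀ i ≤ m, (selectedEntry X πstar i ω ≤ t i ↔ ω ∈ rowMaxLE X σ i (t i)) :=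
    fun ω hω i hi => selectedEntry_le_iff hgreedy (hω.mono (Iio_subset_Iio hi)) (t i)
  have hZ : F ∩ ⋂ i ∈ s, selectedEntry X πstar i ⁻¹' Iic (t i) = F ∩ D := by
    ext ω
    simp only [D, mem_inter_iff, mem_iInter, mem_preimage, mem_Iic]
    exact and_congr_right fun hω => forall₂_congr fun i hi => hsel ω hω i (hs i hi).le
  have hmZ : F ∩ (selectedEntry X πstar m ⁻¹' Iic (t m) ∩
      ⋂ i ∈ s, selectedEntry X πstar i ⁻¹' Iic (t i)) = F ∩ (R ∩ D) := by
    ext ω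
    simp only [D, mem_inter_iff, mem_iInter, mem_preimage, mem_Iic]
    exact and_congr_right fun hω => and_congr (hsel ω hω m le_rfl)
      (forall₂_congr fun i hi => hsel ω hω i (hs i hi).le)
  have hindep_rows :=
    hindep.indep_rowsMeasurableSpace hX (S := {m}) (T := Iio m)
      (disjoint_singleton_left.2 self_notMem_Iio)
  have hGD : MeasurableSet[rowsMeasurableSpace X (Iio m)] (G ∩ D) :=
    (measurableSet_greedyPrefixSet σ m).inter
      (Finset.measurableSet_biInter s fun i hi => measurableSet_rowMaxLE (mem_Iio.2 (hs i hi)) σ _)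
  calc μ (F ∩ (selectedEntry X πstar m ⁻¹' Iic (t m) ∩
        ⋂ i ∈ s, selectedEntry X πstar i ⁻¹' Iic (t i)))
      = μ (R ∩ (G ∩ D)) := by rw [hmZ, hFG, inter_left_comm]
    _ = μ R * μ (G ∩ D) :=
        (Indep_iff _ _ μ).1 hindep_rows _ _ (measurableSet_rowMaxLE (mem_singleton m) σ _) hGD
    _ = ν (Iic (t m)) ^ (n - m) * μ (F ∩ ⋂ i ∈ s, selectedEntry X πstar i ⁻¹' Iic (t i)) := by
        rw [measure_rowMaxLE hX hlaw hindep, hZ, hFG]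

theorem measure_iInter_selectedEntry_le [IsProbabilityMeasure μ] (hX : ∀ i j, Measurable (X i j))
    {ν : Measure ℝ} [NullSingletonClass ν] (hlaw : ∀ i j, μ.map (X i j) = ν)
    (hindep : iIndepFun (fun p : Fin n × Fin n => X p.1 p.2) μ)
    (hπ : ∀ i, Measurable fun ω => πstar ω i) (hgreedy : ∀ ω i, IsGreedyAt (X · · ω) (πstar ω) i)
    (s : Finset (Fin n)) (t : Fin n → ℝ) :
    μ (⋂ i ∈ s, selectedEntry X πstar i ⁻¹' Iic (t i)) = ∏ i ∈ s, ν (Iic (t i)) ^ (n - i) := by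
  induction s using Finset.induction_on_max with
  | empty => simp
  | insert m s hlt ih =>
    rw [Finset.set_biInter_insert, Finset.prod_insert fun hm => (hlt m hm).false, ← ih]
    set firstCols := fun ω => (Iio m).domRestrict (πstar ω)
    have hfirstCols : Measurable firstCols := measurable_pi_lambda _ fun k => hπ k
    refine measure_eq_mul_of_forall_preimage_singleton
      (fun b => hfirstCols (measurableSet_singleton b)) fun b => ?_
    rcases (firstCols ⁻¹' {b}).eq_empty_or_nonempty with h | ⟨ω₀, rfl⟩
    · simp [h]
    · have hfiber : firstCols ⁻¹' {firstCols ω₀} = {ω | EqOn (πstar ω) (πstar ω₀) (Iio m)} := by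
        ext ω
        simp only [mem_preimage, mem_singleton_iff, mem_ofPred_eq]
        exact domRestrict_eq_domRestrict_iff
      rw [hfiber]
      exact measure_eqOn_inter_selectedEntry_le hX hlaw hindep hgreedy _ hlt t

end Greedy

/-- Let `X i j` (`i j < n`) be i.i.d. standard normal and let the
greedy random permutation `π*` pick in row `i` the largest entry among columns
not chosen in the previous rows. Then the selected entries
`X 0 (π* 0), …, X (n-1) (π* (n-1))` are independent, and the `i`-th selected
entry is distributed as the maximum of `n - i` i.i.d. standard normals, i.e.
its distribution function is `Φ(t)^(n-i)`. -/
theorem greedy_selected_entries_indep_and_law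
    {Ω : Type*} [MeasurableSpace Ω] (μ : Measure Ω) [IsProbabilityMeasure μ]
    (n : ℕ) (X : Fin n → Fin n → Ω → ℝ)
    (hmeas : ∀ i j, Measurable (X i j))
    (hdist : ∀ i j, Measure.map (X i j) μ = gaussianReal 0 1)
    (hindep : iIndepFun (fun p : Fin n × Fin n => X p.1 p.2) μ)
    (πstar : Ω → Equiv.Perm (Fin n))
    (hπmeas : ∀ i, Measurable (fun ω => πstar ω i))
    (hgreedy : ∀ ω (i j : Fin n), (∀ k, k < i → πstar ω k ≠ j) →
      X i j ω ≤ X i (πstar ω i) ω) :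
    iIndepFun (fun (i : Fin n) ω => X i (πstar ω i) ω) μ ∧
    ∀ (i : Fin n) (t : ℝ),
      (μ {ω | X i (πstar ω i) ω ≤ t}).toReal = stdNormalCDF t ^ (n - (i : ℕ)) := by
  have hgreedy' : ∀ ω i, Greedy.IsGreedyAt (X · · ω) (πstar ω) i :=
    fun ω i j hj => hgreedy ω i j (Greedy.mem_availableCols.1 hj)
  have : NullSingletonClass (gaussianReal 0 1) := nullSingletonClass_gaussianReal one_ne_zero
  have hprod := Greedy.measure_iInter_selectedEntry_le hmeas hdist hindep hπmeas hgreedy'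
  have hlaw : ∀ i t, μ (Greedy.selectedEntry X πstar i ⁻¹' Iic t) =
      gaussianReal 0 1 (Iic t) ^ (n - i) := fun i t => by simpa using hprod {i} fun _ => t
  refine ⟨iIndepFun_of_measure_iInter_Iic (Y := Greedy.selectedEntry X πstar)
    (Greedy.measurable_selectedEntry hmeas hπmeas) fun s t => ?_, fun i t => ?_⟩
  · rw [hprod]
    exact Finset.prod_congr rfl fun i _ => (hlaw i (t i)).symm
  · rw [stdNormalCDF, ← ENNReal.toReal_pow, ← hlaw]
    rfl
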